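/- Fix an optimal machine U together with a code c : Nat.Partrec.Code such that U(p) = Nat.Partrec.Code.eval c (encode p) for all p; define time(p) and BB(n) as the busy beaver data of U. Fix an optimal prefix machine defining KP(n). Then there is a constant d such that for all n, all k ≤ n and all t: if the number of strings p with |p| ≤ n, U(p) defined and time(p) > t is strictly greater than 2^{n−k}, then t ≤ BB(k + KP(n) + d). -/

import Mathlib

open Filter

/-- Kolmogorov complexity of `m` relative to machine `U` (∞ if `m` has no description). -/
noncomputable def KU (U : List Bool →. ℕ) (m : ℕ) : ℕ∞ :=
  sInf {l : ℕ∞ | ∃ p : List Bool, m ∈ U p ∧ (p.length : ℕ∞) = l}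

/-- `U` is an optimal machine. -/
def OptimalMachine (U : List Bool →. ℕ) : Prop :=
  Partrec U ∧ ∀ V : List Bool →. ℕ, Partrec V → ∃ c : ℕ, ∀ m, KU U m ≤ KU V m + (c : ℕ∞)

/-- A total function on strings is length-bounded if it increases length by at most a constant. -/
def LengthBounded (h : List Bool → List Bool) : Prop :=
  ∃ c : ℕ, ∀ x, (h x).length ≤ x.length + c

/-- `U` is an effectively optimal machine. -/
def EffOptimal (U : List Bool →. ℕ) : Prop :=
  Partrec U ∧ ∀ V : List Bool →. ℕ, Partrec V →
    ∃ h : List Bool → List Bool, Computable h ∧ LengthBounded h ∧ ∀ x, U (h x) = V x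

/-- `x` is an error point of `A` as an approximate decision procedure for `dom U`. -/
def ErrorPoint (U : List Bool →. ℕ) (A : List Bool →. Bool) (x : List Bool) : Prop :=
  ¬(((U x).Dom ∧ true ∈ A x) ∨ (¬(U x).Dom ∧ false ∈ A x))

/-- fraction of error points among strings of length at most `n`. -/
noncomputable def errRate (U : List Bool →. ℕ) (A : List Bool →. Bool) (n : ℕ) : ℝ :=
  (Set.ncard {x : List Bool | x.length ≤ n ∧ ErrorPoint U A x} : ℝ) / 2 ^ (n + 1)

def LeftTotal (U : List Bool →. ℕ) : Prop :=
  ∀ x y : List Bool, x.length = y.length → List.Lex (· < ·) x y → (U y).Dom → (U x).Dom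

noncomputable def haltRate (U : List Bool →. ℕ) (n : ℕ) : ℝ :=
  (Set.ncard {x : List Bool | x.length ≤ n ∧ (U x).Dom} : ℝ) / 2 ^ (n + 1)

def MOptimal (S : Set (List Bool)) : Prop :=
  REPred (· ∈ S) ∧ ∀ W : Set (List Bool), REPred (· ∈ W) →
    ∃ h : List Bool → List Bool, Computable h ∧ LengthBounded h ∧ ∀ x, x ∈ W ↔ h x ∈ S

def SimpleSet (S : Set (List Bool)) : Prop :=
  REPred (· ∈ S) ∧ Sᶜ.Infinite ∧
    ∀ W : Set (List Bool), REPred (· ∈ W) → W ⊆ Sᶜ → W.Finite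

noncomputable def compTime (c : Nat.Partrec.Code) (p : List Bool) : ℕ :=
  sInf {k : ℕ | (Nat.Partrec.Code.evaln k c (Encodable.encode p)).isSome}

noncomputable def BB (U : List Bool →. ℕ) (c : Nat.Partrec.Code) (n : ℕ) : ℕ :=
  sSup {t : ℕ | ∃ p : List Bool, p.length ≤ n ∧ (U p).Dom ∧ t = compTime c p}

noncomputable def Bfun (U : List Bool →. ℕ) (n : ℕ) : ℕ :=
  sSup {m : ℕ | KU U m ≤ (n : ℕ∞)}


/-- A prefix machine: its domain is prefix-free. -/
def PrefixMachine (M : List Bool →. ℕ) : Prop :=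
  Partrec M ∧ ∀ p q : List Bool, (M p).Dom → (M q).Dom → p <+: q → p = q

/-- Prefix complexity of `n` with respect to `M`. -/
noncomputable def KPm (M : List Bool →. ℕ) (n : ℕ) : ℕ∞ :=
  sInf {l : ℕ∞ | ∃ p : List Bool, n ∈ M p ∧ (p.length : ℕ∞) = l}

/-- `M` is an optimal prefix machine. -/
def OptimalPrefix (M : List Bool →. ℕ) : Prop :=
  PrefixMachine M ∧ ∀ M' : List Bool →. ℕ, PrefixMachine M' →
    ∃ c : ℕ, ∀ n : ℕ, KPm M n ≤ KPm M' n + (c : ℕ∞)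

/-!
Let `D` be the number of programs of length `≤ n` on which `U` halts, and `g = n - k`. Since
`D < 2 ^ (n + 1)`, the number `⌊D / 2 ^ g⌋` has `k + 1` binary digits `w`. Given a shortest
prefix program `p` for `n`, the string `p ++ w` determines `n`, `g` and `w`, hence lets us
compute the first stage `j` at which `⌊D / 2 ^ g⌋ * 2 ^ g` of those programs have halted. If
more than `2 ^ g` of them are still running at time `t`, then `t < j`. A number that `U` cannot
print within `j` steps is therefore computable from a string of length `k + KP(n) + 1`, so it
has a `U`-program of length `≤ k + KP(n) + d`, and that program runs for more than `j > t` steps.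
-/

open Nat.Partrec (Code)
open Nat.Partrec.Code Encodable

namespace BusyBeaver

def stringsUpTo : ℕ → List (List Bool)
  | 0 => [[]]
  | n + 1 => [] :: ((stringsUpTo n).map (true :: ·) ++ (stringsUpTo n).map (false :: ·))

theorem mem_stringsUpTo : ∀ {n : ℕ} {x : List Bool}, x ∈ stringsUpTo n ↔ x.length ≤ n
  | 0, x => by cases x <;> simp [stringsUpTo]
  | n + 1, [] => by simp [stringsUpTo]
  | n + 1, b :: x => by cases b <;> simp [stringsUpTo, mem_stringsUpTo]

theorem nodup_stringsUpTo : ∀ n, (stringsUpTo n).Nodup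
  | 0 => by simp [stringsUpTo]
  | n + 1 => by
    have ih := nodup_stringsUpTo n
    refine List.nodup_cons.2 ⟨by simp, ?_⟩
    refine (ih.map List.cons_injective).append (ih.map List.cons_injective) ?_
    simp [List.disjoint_left]

theorem length_stringsUpTo : ∀ n, (stringsUpTo n).length + 1 = 2 ^ (n + 1)
  | 0 => rfl
  | n + 1 => by
    have ih := length_stringsUpTo n
    simp only [stringsUpTo, List.length_cons, List.length_append, List.length_map, pow_succ]
    omega

theorem primrec_stringsUpTo : Primrec stringsUpTo := by
  have hcons (b : Bool) : Primrec₂ fun (_ : List (List Bool)) (x : List Bool) => b :: x :=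
    Primrec.list_cons.comp (Primrec.const b) Primrec.snd
  have hstep : Primrec₂ fun (_ : ℕ) (L : List (List Bool)) =>
      ([] : List Bool) :: (L.map (true :: ·) ++ L.map (false :: ·)) :=
    (Primrec.list_cons.comp (Primrec.const []) (Primrec.list_append.comp
      (Primrec.list_map .id (hcons true)) (Primrec.list_map .id (hcons false)))).comp Primrec.snd
  refine (Primrec.nat_rec₁ [[]] hstep).of_eq fun n => ?_
  induction n with
  | zero => rfl
  | succ n ih => simp [stringsUpTo, ih]

theorem finite_length_le_and (n : ℕ) (P : List Bool → Prop) :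
    {x : List Bool | x.length ≤ n ∧ P x}.Finite :=
  (List.finite_length_le Bool n).subset fun _ hx => hx.1

theorem ncard_length_le_and (n : ℕ) (P : List Bool → Bool) :
    {x : List Bool | x.length ≤ n ∧ P x}.ncard = ((stringsUpTo n).filter P).length := by
  have : {x : List Bool | x.length ≤ n ∧ P x} = ((stringsUpTo n).filter P).toFinset := by
    ext x; simp [mem_stringsUpTo]
  rw [this, Set.ncard_coe_finset, List.toFinset_card_of_nodup ((nodup_stringsUpTo n).filter P)]

theorem ncard_length_le_lt (n : ℕ) : {x : List Bool | x.length ≤ n}.ncard < 2 ^ (n + 1) := by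
  have := ncard_length_le_and n fun _ => true
  simp only [and_true, List.filter_true] at this
  have := length_stringsUpTo n
  omega

def ofBits (w : List Bool) : ℕ := w.foldr (fun b a => b.toNat + 2 * a) 0

theorem exists_ofBits_eq : ∀ {L a : ℕ}, a < 2 ^ L → ∃ w, w.length = L ∧ ofBits w = a
  | 0, a, h => ⟨[], rfl, by simp_all [ofBits]⟩
  | L + 1, a, h => by
    obtain ⟨w, hw, hwa⟩ := exists_ofBits_eq (L := L) (a := a / 2) (by rw [pow_succ] at h; omega)
    refine ⟨decide (a % 2 = 1) :: w, by simp [hw], ?_⟩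
    simp only [ofBits, List.foldr_cons] at hwa ⊢
    rw [hwa]
    rcases Nat.mod_two_eq_zero_or_one a with h2 | h2 <;> simp [h2] <;> omega

theorem primrec_ofBits : Primrec ofBits := by
  have htoNat : Primrec Bool.toNat :=
    (Primrec.cond .id (Primrec.const 1) (Primrec.const 0)).of_eq fun b => by cases b <;> rfl
  exact Primrec.list_foldr .id (Primrec.const 0) (Primrec.nat_add.comp
    (htoNat.comp (Primrec.fst.comp Primrec.snd))
    (Primrec.nat_mul.comp (Primrec.const 2) (Primrec.snd.comp Primrec.snd))).to₂

section RunningTime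

variable {c : Code} {p : List Bool}

theorem evaln_compTime_isSome (h : (eval c (encode p)).Dom) :
    (evaln (compTime c p) c (encode p)).isSome := by
  obtain ⟨x, hx⟩ := Part.dom_iff_mem.1 h
  obtain ⟨k, hk⟩ := evaln_complete.1 hx
  exact Nat.sInf_mem (s := {k | (evaln k c (encode p)).isSome})
    ⟨k, Option.isSome_iff_exists.2 ⟨x, hk⟩⟩

theorem compTime_le_iff (h : (eval c (encode p)).Dom) {j : ℕ} :
    compTime c p ≤ j ↔ (evaln j c (encode p)).isSome := by
  refine ⟨fun hle => ?_, fun hj => Nat.sInf_le hj⟩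
  obtain ⟨x, hx⟩ := Option.isSome_iff_exists.1 (evaln_compTime_isSome h)
  exact Option.isSome_iff_exists.2 ⟨x, evaln_mono hle hx⟩

/-- Inputs of `evaln j c` are `< j` (`evaln_bound`), so this bounds all of its outputs. -/
def outBound (c : Code) (j : ℕ) : ℕ := ((List.range j).map fun i => (evaln j c i).getD 0).sum

theorem le_outBound {j i x : ℕ} (h : x ∈ evaln j c i) : x ≤ outBound c j := by
  refine List.le_sum_of_mem (List.mem_map.2 ⟨i, List.mem_range.2 (evaln_bound h), ?_⟩)
  simp [Option.mem_def.1 h]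

theorem primrec_outBound (c : Code) : Primrec (outBound c) := by
  have hev : Primrec₂ fun j i => (evaln j c i).getD 0 :=
    Primrec.option_getD.comp
      (primrec_evaln.comp ((Primrec.fst.pair (Primrec.const c)).pair Primrec.snd))
      (Primrec.const 0)
  have hsum := Primrec.list_foldr (Primrec.list_map Primrec.list_range hev) (Primrec.const 0)
    (Primrec.nat_add.comp (Primrec.fst.comp Primrec.snd) (Primrec.snd.comp Primrec.snd)).to₂
  exact hsum.of_eq fun j => List.sum_eq_foldr.symm

theorem lt_compTime_of_outBound_lt {m j : ℕ} (hm : m ∈ eval c (encode p))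
    (hj : outBound c j < m) : j < compTime c p := by
  by_contra! hle
  obtain ⟨x, hx⟩ :=
    Option.isSome_iff_exists.1 ((compTime_le_iff (Part.dom_iff_mem.2 ⟨m, hm⟩)).1 hle)
  have : x = m := Part.mem_unique (evaln_sound hx) hm
  exact absurd (le_outBound hx) (by omega)

theorem compTime_le_BB {U : List Bool →. ℕ} {N : ℕ} (hp : (U p).Dom) (hlen : p.length ≤ N) :
    compTime c p ≤ BB U c N := by
  refine le_csSup ?_ ⟨p, hlen, hp, rfl⟩
  refine ((List.finite_length_le Bool N).image (compTime c)).bddAbove.mono ?_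
  rintro _ ⟨q, hq, -, rfl⟩
  exact ⟨q, hq, rfl⟩

end RunningTime

section Complexity

variable {U : List Bool →. ℕ} {m : ℕ}

theorem KU_le_length {p : List Bool} (h : m ∈ U p) : KU U m ≤ p.length :=
  sInf_le ⟨p, h, rfl⟩

theorem exists_length_le_of_KU_le {N : ℕ} (h : KU U m ≤ N) :
    ∃ p, m ∈ U p ∧ p.length ≤ N := by
  have hne : {l : ℕ∞ | ∃ p : List Bool, m ∈ U p ∧ (p.length : ℕ∞) = l}.Nonempty := by
    by_contra hempty
    rw [Set.not_nonempty_iff_eq_empty] at hempty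
    simp [KU, hempty] at h
  obtain ⟨p, hp, hlen⟩ := csInf_mem hne
  exact ⟨p, hp, by rw [← Nat.cast_le (α := ℕ∞), hlen]; exact h⟩

end Complexity

def unary (n : ℕ) : List Bool := List.replicate n true ++ [false]

theorem eq_of_unary_prefix : ∀ {a b : ℕ}, unary a <+: unary b → a = b
  | 0, 0, _ => rfl
  | 0, b + 1, h => by simp [unary, List.replicate_succ] at h
  | a + 1, 0, h => by simpa [unary, List.replicate_succ] using h.length_le
  | a + 1, b + 1, h => by
    simp only [unary, List.replicate_succ, List.cons_append, List.cons_prefix_cons, true_and] at h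
    exact congrArg (· + 1) (eq_of_unary_prefix h)

def unaryMachine : List Bool →. ℕ := fun p =>
  ((if p = unary (p.length - 1) then some (p.length - 1) else none : Option ℕ) : Part ℕ)

theorem mem_unaryMachine (n : ℕ) : n ∈ unaryMachine (unary n) := by
  simp [unaryMachine, unary]

theorem prefixMachine_unaryMachine : PrefixMachine unaryMachine := by
  refine ⟨Computable.ofOption ?_, fun p q hp hq hpq => ?_⟩
  · have hlen : Primrec fun p : List Bool => p.length - 1 := Primrec.pred.comp Primrec.list_length
    have hunary : Primrec unary :=
      Primrec.list_append.comp
        ((Primrec.list_map Primrec.list_range (Primrec.const true).to₂).of_eq fun n => by simp)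
        (Primrec.const [false])
    exact Primrec.ite (Primrec.eq.comp .id (hunary.comp hlen)) (Primrec.option_some.comp hlen)
      (Primrec.const none) |>.to_comp
  · have unary_of_dom {p} (h : (unaryMachine p).Dom) : p = unary (p.length - 1) := by
      by_contra hp
      simp [unaryMachine, hp] at h
    rw [unary_of_dom hp, unary_of_dom hq] at hpq ⊢
    rw [eq_of_unary_prefix hpq]

theorem KPm_ne_top_of_optimalPrefix {M : List Bool →. ℕ} (hM : OptimalPrefix M) (n : ℕ) :
    KPm M n ≠ ⊤ := by
  obtain ⟨d, hd⟩ := hM.2 _ prefixMachine_unaryMachine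
  refine ne_top_of_le_ne_top ?_ (hd n)
  have : KPm unaryMachine n ≠ ⊤ :=
    ne_top_of_le_ne_top (ENat.natCast_ne_top _) (KU_le_length (mem_unaryMachine n))
  exact WithTop.add_ne_top.2 ⟨this, ENat.natCast_ne_top d⟩

theorem exists_length_le_toNat_KPm {M : List Bool →. ℕ} (hM : OptimalPrefix M) (n : ℕ) :
    ∃ p, n ∈ M p ∧ p.length ≤ (KPm M n).toNat :=
  exists_length_le_of_KU_le (ENat.natCast_toNat (KPm_ne_top_of_optimalPrefix hM n)).ge

theorem Partrec.exists_code_eval_encode {α : Type*} [Primcodable α] {f : α →. ℕ}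
    (hf : Partrec f) : ∃ c : Code, ∀ a, eval c (encode a) = f a := by
  obtain ⟨c, hc⟩ := exists_code.1 hf
  exact ⟨c, fun a => by simp [hc, encodek, Part.map_id' (f := encode (α := ℕ)) fun _ => rfl]⟩

def haltCount (c : Code) (n j : ℕ) : ℕ :=
  ((stringsUpTo n).filter fun x => (evaln j c (encode x)).isSome).length

section HaltCount

variable (c : Code) (n : ℕ)

theorem haltCount_eq_ncard (j : ℕ) : haltCount c n j =
    {x : List Bool | x.length ≤ n ∧ (evaln j c (encode x)).isSome}.ncard :=
  (ncard_length_le_and n _).symm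

theorem haltCount_mono : Monotone (haltCount c n) := by
  intro j j' hj
  simp only [haltCount_eq_ncard]
  refine Set.ncard_le_ncard ?_ (finite_length_le_and n _)
  rintro x ⟨hx, hs⟩
  obtain ⟨v, hv⟩ := Option.isSome_iff_exists.1 hs
  exact ⟨hx, Option.isSome_iff_exists.2 ⟨v, evaln_mono hj hv⟩⟩

theorem primrec_haltCount : Primrec₂ (haltCount c) := by
  have hR : PrimrecRel fun (x : List Bool) (j : ℕ) => (evaln j c (encode x)).isSome = true :=
    Primrec.eq.comp (Primrec.option_isSome.comp (primrec_evaln.comp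
      ((Primrec.snd.pair (Primrec.const c)).pair (Primrec.encode.comp Primrec.fst))))
      (Primrec.const true)
  exact Primrec.list_length.comp
    (hR.listFilter.comp (primrec_stringsUpTo.comp Primrec.fst) Primrec.snd) |>.of_eq
    fun _ => by simp [haltCount]

end HaltCount

/-- `x` is read as a prefix program for `n`, and `y` as the `|y|` binary digits of a lower bound,
in units of `2 ^ (n + 1 - |y|)`, for the number of programs of length `≤ n` that halt. -/
def accepts (c cM : Code) (j : ℕ) (x y : List Bool) : Bool :=
  (evaln j cM (encode x)).any fun n =>
    decide (ofBits y * 2 ^ (n + 1 - y.length) ≤ haltCount c n j)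

def splitAccepted (c cM : Code) (j : ℕ) (q : List Bool) : Bool :=
  decide (∃ i < q.length + 1, accepts c cM j (q.take i) (q.drop i))

theorem splitAccepted_iff {c cM : Code} {j : ℕ} {q : List Bool} :
    splitAccepted c cM j q ↔ ∃ x y, x ++ y = q ∧ accepts c cM j x y := by
  rw [splitAccepted, decide_eq_true_iff]
  constructor
  · rintro ⟨i, -, hi⟩
    exact ⟨_, _, List.take_append_drop i q, hi⟩
  · rintro ⟨x, y, rfl, hxy⟩
    exact ⟨x.length, by simp, by simpa using hxy⟩

/-- By `le_outBound`, `c` cannot print the output within the accepting stage. -/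
def searchMachine (c cM : Code) : List Bool →. ℕ := fun q =>
  (Nat.rfind fun j => Part.some (splitAccepted c cM j q)).map fun j => outBound c j + 1

theorem partrec_searchMachine (c cM : Code) : Partrec (searchMachine c cM) := by
  have hacc : Primrec fun a : ℕ × ℕ × List Bool =>
      accepts c cM a.2.1 (a.2.2.take a.1) (a.2.2.drop a.1) := by
    have hx : Primrec fun a : ℕ × ℕ × List Bool => a.2.2.take a.1 :=
      Primrec.list_take.comp Primrec.fst (Primrec.snd.comp Primrec.snd)
    have hy : Primrec fun a : ℕ × ℕ × List Bool => a.2.2.drop a.1 :=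
      Primrec.list_drop.comp Primrec.fst (Primrec.snd.comp Primrec.snd)
    have hev := primrec_evaln.comp (((Primrec.fst.comp Primrec.snd).pair (Primrec.const cM)).pair
      (Primrec.encode.comp hx))
    have htest : Primrec₂ fun (a : ℕ × ℕ × List Bool) (n : ℕ) =>
        decide (ofBits (a.2.2.drop a.1) * 2 ^ (n + 1 - (a.2.2.drop a.1).length) ≤
          haltCount c n a.2.1) := by
      have hpow : Primrec₂ fun a b : ℕ => a ^ b := Primrec₂.unpaired'.mp Nat.Primrec.pow
      refine Primrec.nat_le.decide.comp (Primrec.nat_mul.comp (primrec_ofBits.comp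
        (hy.comp Primrec.fst)) (hpow.comp (Primrec.const 2) (Primrec.nat_sub.comp
          (Primrec.succ.comp Primrec.snd) (Primrec.list_length.comp (hy.comp Primrec.fst)))))
        ((primrec_haltCount c).comp Primrec.snd (Primrec.fst.comp (Primrec.snd.comp Primrec.fst)))
    exact (Primrec.option_casesOn hev (Primrec.const false) htest).of_eq fun a => by
      rcases h : evaln a.2.1 cM (encode (a.2.2.take a.1)) with _ | n <;> simp [accepts, h]
  have hsplit : Primrec₂ (splitAccepted c cM) := by
    have hR : PrimrecRel fun (i : ℕ) (b : ℕ × List Bool) =>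
        accepts c cM b.1 (b.2.take i) (b.2.drop i) = true :=
      Primrec.eq.comp hacc (Primrec.const true)
    exact (hR.exists_mem_list.decide.comp (Primrec.list_range.comp
      (Primrec.succ.comp (Primrec.list_length.comp Primrec.snd))) .id).of_eq
      fun _ => by simp [splitAccepted]
  exact ((Partrec.rfind (hsplit.comp Primrec.snd Primrec.fst).to_comp.to₂.partrec₂).map
    ((Primrec.succ.comp ((primrec_outBound c).comp Primrec.snd)).to_comp.to₂)).of_eq fun _ => rfl

theorem exists_mem_searchMachine {c cM : Code} {q : List Bool} {J : ℕ}
    (hJ : splitAccepted c cM J q) :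
    ∃ j, splitAccepted c cM j q ∧ outBound c j + 1 ∈ searchMachine c cM q := by
  obtain ⟨j, hj, -⟩ := Nat.rfind_min' (p := fun j => splitAccepted c cM j q) hJ
  exact ⟨j, by simpa using Nat.rfind_spec hj, Part.mem_map _ hj⟩

/-- Prefix-freeness makes `(p, w)` the only split of `p ++ w` whose first half halts. -/
theorem splitAccepted_append_iff {c cM : Code} {M : List Bool →. ℕ} (hM : PrefixMachine M)
    (hcM : ∀ x, eval cM (encode x) = M x) {p w : List Bool} {n j : ℕ} (hp : n ∈ M p) :
    splitAccepted c cM j (p ++ w) ↔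
      n ∈ evaln j cM (encode p) ∧ ofBits w * 2 ^ (n + 1 - w.length) ≤ haltCount c n j := by
  rw [splitAccepted_iff]
  constructor
  · rintro ⟨x, y, hxy, hacc⟩
    obtain ⟨n', hn', htest⟩ := (Option.any_eq_true _ _).1 hacc
    have hxM : n' ∈ M x := hcM x ▸ evaln_sound hn'
    have hxp : x = p := by
      have hxD := Part.dom_iff_mem.2 ⟨_, hxM⟩
      have hpD := Part.dom_iff_mem.2 ⟨_, hp⟩
      rcases List.prefix_or_prefix_of_prefix ⟨y, hxy⟩ (List.prefix_append p w) with h | h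
      · exact hM.2 x p hxD hpD h
      · exact (hM.2 p x hpD hxD h).symm
    subst hxp
    obtain rfl : y = w := List.append_cancel_left hxy
    obtain rfl : n' = n := Part.mem_unique hxM hp
    exact ⟨hn', of_decide_eq_true htest⟩
  · rintro ⟨hev, htest⟩
    exact ⟨p, w, rfl, (Option.any_eq_true _ _).2 ⟨n, hev, decide_eq_true htest⟩⟩

section Counting

variable {U : List Bool →. ℕ} {c : Code} (n : ℕ)

theorem haltCount_add_ncard_le (hc : ∀ p, U p = eval c (encode p)) (t : ℕ) :
    haltCount c n t + {p : List Bool | p.length ≤ n ∧ (U p).Dom ∧ t < compTime c p}.ncard ≤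
      {p : List Bool | p.length ≤ n ∧ (U p).Dom}.ncard := by
  have hdisj : Disjoint {x : List Bool | x.length ≤ n ∧ (evaln t c (encode x)).isSome}
      {p : List Bool | p.length ≤ n ∧ (U p).Dom ∧ t < compTime c p} := by
    refine Set.disjoint_left.2 fun x ⟨_, hs⟩ ⟨_, _, hlt⟩ => ?_
    have : compTime c x ≤ t := Nat.sInf_le hs
    omega
  rw [haltCount_eq_ncard, ← Set.ncard_union_eq hdisj (finite_length_le_and n _)
    (finite_length_le_and n _)]
  refine Set.ncard_le_ncard ?_ (finite_length_le_and n _)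
  rintro x (⟨hx, hs⟩ | ⟨hx, hd, -⟩)
  · obtain ⟨v, hv⟩ := Option.isSome_iff_exists.1 hs
    exact ⟨hx, hc x ▸ Part.dom_iff_mem.2 ⟨v, evaln_sound hv⟩⟩
  · exact ⟨hx, hd⟩

theorem exists_ncard_le_haltCount (hc : ∀ p, U p = eval c (encode p)) :
    ∃ J, {p : List Bool | p.length ≤ n ∧ (U p).Dom}.ncard ≤ haltCount c n J := by
  obtain ⟨J, hJ⟩ := ((finite_length_le_and n _).image (compTime c)).bddAbove
  refine ⟨J, ?_⟩
  rw [haltCount_eq_ncard]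
  refine Set.ncard_le_ncard (fun x ⟨hx, hd⟩ => ⟨hx, ?_⟩) (finite_length_le_and n _)
  exact (compTime_le_iff (hc x ▸ hd)).1 (hJ ⟨x, ⟨hx, hd⟩, rfl⟩)

end Counting

/-- `w` holds the `k + 1` binary digits of `⌊D / 2 ^ (n - k)⌋`, where `D` counts the halting
programs of length `≤ n`. -/
theorem exists_late_output {U M : List Bool →. ℕ} {c cM : Code}
    (hc : ∀ p, U p = eval c (encode p)) (hM : PrefixMachine M)
    (hcM : ∀ x, eval cM (encode x) = M x) {p : List Bool} {n k t : ℕ} (hp : n ∈ M p)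
    (hk : k ≤ n)
    (hslow : 2 ^ (n - k) <
      {p : List Bool | p.length ≤ n ∧ (U p).Dom ∧ t < compTime c p}.ncard) :
    ∃ w : List Bool, w.length = k + 1 ∧
      ∃ j, t < j ∧ outBound c j + 1 ∈ searchMachine c cM (p ++ w) := by
  set D := {p : List Bool | p.length ≤ n ∧ (U p).Dom}.ncard
  have hD : D < 2 ^ (k + 1) * 2 ^ (n - k) := by
    rw [← pow_add, show k + 1 + (n - k) = n + 1 by omega]
    exact (Set.ncard_le_ncard (fun _ hx => hx.1) (List.finite_length_le Bool n)).trans_lt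
      (ncard_length_le_lt n)
  obtain ⟨w, hwlen, hw⟩ := exists_ofBits_eq ((Nat.div_lt_iff_lt_mul (by positivity)).2 hD)
  have hexp : n + 1 - w.length = n - k := by omega
  have hacc_iff {j : ℕ} := splitAccepted_append_iff (c := c) (j := j) (w := w) hM hcM hp
  rw [hw, hexp] at hacc_iff
  obtain ⟨J₁, hJ₁⟩ := evaln_complete.1 (hcM p ▸ hp)
  obtain ⟨J₂, hJ₂⟩ := exists_ncard_le_haltCount n hc
  obtain ⟨j, hj, hmem⟩ := exists_mem_searchMachine (hacc_iff.2
    ⟨evaln_mono (le_max_left _ _) hJ₁, (Nat.div_mul_le_self _ _).trans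
      (hJ₂.trans (haltCount_mono c n (le_max_right _ _)))⟩)
  refine ⟨w, hwlen, j, ?_, hmem⟩
  -- at a stage `j ≤ t` fewer than `D - 2 ^ (n - k)` programs have halted, which is less than
  -- `⌊D / 2 ^ (n - k)⌋ * 2 ^ (n - k)`
  by_contra! hjt
  have := (hacc_iff.1 hj).2.trans (haltCount_mono c n hjt)
  have := haltCount_add_ncard_le n hc t
  have := Nat.div_add_mod' D (2 ^ (n - k))
  have := Nat.mod_lt D (show 0 < 2 ^ (n - k) by positivity)
  omega

end BusyBeaver

open BusyBeaver

/-- if after `t` steps more than `2^(n-k)` terminating computations of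
length ≤ n are still running, then `t ≤ BB(k + KP(n) + d)`. -/
theorem busy_beaver_upper_bound (U : List Bool →. ℕ) (hU : OptimalMachine U)
    (c : Nat.Partrec.Code)
    (hc : ∀ p : List Bool, U p = c.eval (Encodable.encode p))
    (M : List Bool →. ℕ) (hM : OptimalPrefix M) :
    ∃ d : ℕ, ∀ n : ℕ, ∀ k ≤ n, ∀ t : ℕ,
      2 ^ (n - k) <
        Set.ncard {p : List Bool | p.length ≤ n ∧ (U p).Dom ∧ t < compTime c p} →
      t ≤ BB U c (k + (KPm M n).toNat + d) := by
  obtain ⟨cM, hcM⟩ := Partrec.exists_code_eval_encode hM.1.1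
  obtain ⟨d, hd⟩ := hU.2 _ (partrec_searchMachine c cM)
  refine ⟨d + 1, fun n k hk t hslow => ?_⟩
  obtain ⟨p, hp, hplen⟩ := exists_length_le_toNat_KPm hM n
  obtain ⟨w, hwlen, j, htj, hj⟩ := exists_late_output hc hM.1 hcM hp hk hslow
  obtain ⟨q, hq, hqlen⟩ := exists_length_le_of_KU_le (U := U)
    (N := k + (KPm M n).toNat + (d + 1)) <| calc
      KU U (outBound c j + 1) ≤ KU (searchMachine c cM) (outBound c j + 1) + d := hd _
      _ ≤ (p ++ w).length + d := by gcongr; exact KU_le_length hj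
      _ ≤ _ := by norm_cast; simp only [List.length_append]; omega
  have hjq : j < compTime c q := lt_compTime_of_outBound_lt (hc q ▸ hq) (Nat.lt_succ_self _)
  exact (htj.trans hjq).le.trans (compTime_le_BB (Part.dom_iff_mem.2 ⟨_, hq⟩) hqlen)
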